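/- Generic non-degeneracy under random perturbation (Proposition 6): Fix a finite world set Ω, agent sets A and B with |A| = |B| = n, arbitrary values v_x(y | ω) ∈ ℝ, and ε > 0. Let (ε_{x,y,ω}) be a family of independent random variables, each uniformly distributed on (−ε, ε), indexed by agents x, agents y on the other side, and worlds ω, and set ṽ_x(y | ω) := v_x(y | ω) + ε_{x,y,ω}. Then with probability 1 the instance with values ṽ is non-degenerate. -/

import Mathlib

/-!
Fix `|Ω|` covering pairs `y ⋖ y'` of a profile. The determinant of the perturbed difference
vectors `ṽ_x(y | ·) - ṽ_x(y' | ·)` is a polynomial in the noise, and it is not the zero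
polynomial: the covering pairs of all agents form a forest, so prescribed differences along
distinct edges are realised by a potential on the nodes, and some noise turns the matrix into
the identity. A nonzero polynomial vanishes only on a null set of any product of atomless
measures (Fubini, one variable at a time), and there are finitely many choices of pairs.
-/

open Finset MeasureTheory

namespace MP

/-- `r` is a strict total order (written `r x y ↔ x ≺ y`). -/
def StrictOrd {X : Type*} (r : X → X → Bool) : Prop :=
  (∀ x, r x x = false) ∧
  (∀ x y z, r x y = true → r y z = true → r x z = true) ∧
  (∀ x y, x ≠ y → (r x y = true ∨ r y x = true))

/-- A (raw) preference profile: `Bool`-valued relations for both sides. -/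
abbrev Pref (A B : Type*) := (A → B → B → Bool) × (B → A → A → Bool)

/-- A strict preference profile: each agent has a strict total order. -/
def StrictProfile {A B : Type*} (L : Pref A B) : Prop :=
  (∀ a, StrictOrd (L.1 a)) ∧ (∀ b, StrictOrd (L.2 b))

/-- `y'` is the immediate successor of `y` in the strict order `r`. -/
def Covers {X : Type*} (r : X → X → Bool) (y y' : X) : Prop :=
  r y y' = true ∧ ∀ z, ¬(r y z = true ∧ r z y' = true)

/-- The set `V_≺` of consecutive-difference vectors of a strict profile `L`:
all vectors `(v_x(y_ℓ | ω) − v_x(y_{ℓ+1} | ω))_ω` where `y_{ℓ+1}` is the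
immediate `≺_x`-successor of `y_ℓ`. -/
def Vset {Ω A B : Type*} (vA : A → B → Ω → ℝ) (vB : B → A → Ω → ℝ)
    (L : Pref A B) : Set (Ω → ℝ) :=
  {w | (∃ a y y', Covers (L.1 a) y y' ∧ w = fun ω => vA a y ω - vA a y' ω) ∨
       (∃ b x x', Covers (L.2 b) x x' ∧ w = fun ω => vB b x ω - vB b x' ω)}

/-- Non-degeneracy: for every strict preference profile, every subset of `V_≺`
of cardinality `|Ω|` is linearly independent. -/
def NonDegenerate {Ω A B : Type*} [Fintype Ω]
    (vA : A → B → Ω → ℝ) (vB : B → A → Ω → ℝ) : Prop :=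
  ∀ L : Pref A B, StrictProfile L →
    ∀ s : Finset (Ω → ℝ), ↑s ⊆ Vset vA vB L → s.card = Fintype.card Ω →
      LinearIndependent ℝ (fun w : s => (w : Ω → ℝ))

/-- The uniform probability measure on the interval `(-ε, ε)`. -/
noncomputable def unif (ε : ℝ) : Measure ℝ :=
  (ENNReal.ofReal (2 * ε))⁻¹ • volume.restrict (Set.Ioo (-ε) ε)

end MP

universe u

namespace MvPolynomial

theorem ae_pi_eval_ne_zero {ι : Type u} [Fintype ι] (μ : ι → Measure ℝ)
    [∀ i, SigmaFinite (μ i)] [∀ i, NullSingletonClass (μ i)] {p : MvPolynomial ι ℝ}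
    (hp : p ≠ 0) : ∀ᵐ x ∂Measure.pi μ, eval x p ≠ 0 := by
  -- the motive must quantify over the `Fintype` instance, which changes along equivalences
  suffices H : ∀ (α : Type u) [Finite α] [Fintype α] (μ : α → Measure ℝ)
      [∀ i, SigmaFinite (μ i)] [∀ i, NullSingletonClass (μ i)] (p : MvPolynomial α ℝ),
      p ≠ 0 → ∀ᵐ x ∂Measure.pi μ, eval x p ≠ 0 from H ι μ p hp
  refine Finite.induction_empty_option ?_ ?_ ?_
  · intro α β e ih _ μ _ _ p hp
    have := Fintype.ofEquiv _ e.symm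
    have hpe : rename e.symm p ≠ 0 :=
      (map_ne_zero_iff _ (rename_injective _ e.symm.injective)).2 hp
    rw [ae_iff, ← (measurePreserving_piCongrLeft μ e).measure_preimage_equiv]
    refine (ih (fun a => μ (e a)) _ hpe).mono fun x hx hx' => hx ?_
    have hx_eq : MeasurableEquiv.piCongrLeft (fun _ => ℝ) e x = x ∘ e.symm := by
      ext b
      obtain ⟨a, rfl⟩ := e.surjective b
      simp [MeasurableEquiv.coe_piCongrLeft, Equiv.piCongrLeft_apply_apply]
    simpa [eval_rename, hx_eq] using hx'
  · intro _ μ _ _ p hp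
    refine .of_forall fun x hx => hp (funext fun y => ?_)
    rw [Subsingleton.elim y x, hx, map_zero]
  · intro α _ ih hα μ _ _ p hp
    obtain rfl : hα = instFintypeOption := Subsingleton.elim _ _
    set q := optionEquivLeft ℝ α p
    have hq : q.leadingCoeff ≠ 0 := Polynomial.leadingCoeff_ne_zero.2
      ((map_ne_zero_iff _ (optionEquivLeft ℝ α).injective).2 hp)
    let e := MeasurableEquiv.piOptionEquivProd (fun _ : Option α => ℝ)
    have he : ∀ z, e.symm z = fun i => Option.elim i z.2 z.1 := fun z => by
      ext i; cases i <;> rfl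
    have hzero : e.symm ⁻¹' {x | ¬ eval x p ≠ 0} =
        {z | Polynomial.eval z.2 (q.map (eval z.1)) = 0} := by
      ext z
      simp [he, q, optionEquivLeft_elim_eval]
    have hmeas : MeasurableSet (e.symm ⁻¹' {x | ¬ eval x p ≠ 0}) := by
      refine e.symm.measurable ?_
      simpa using measurableSet_eq_fun (continuous_eval p).measurable measurable_const
    rw [ae_iff, ← Measure.pi_map_piOptionEquivProd μ, MeasurableEquiv.map_apply,
      Measure.measure_prod_null hmeas, hzero]
    filter_upwards [ih (fun i => μ (some i)) _ hq] with s hs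
    have hqs : q.map (eval s) ≠ 0 := fun h => hs (by
      rw [Polynomial.leadingCoeff, ← Polynomial.coeff_map, h, Polynomial.coeff_zero])
    exact (Polynomial.finite_setOfPred_isRoot hqs).measure_zero _

end MvPolynomial

section ForestOrder

variable {N : Type*} [PartialOrder N] (hchain : ∀ v : N, IsChain (· ≤ ·) (Set.Iic v))
include hchain

theorem le_of_lt_of_covBy_of_isChain {u v w : N} (huv : u ⋖ v) (hw : w < v) : w ≤ u := by
  rcases eq_or_ne w u with rfl | hne
  · exact le_rfl
  rcases hchain v hw.le huv.le hne with hwu | huw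
  · exact hwu
  · exact absurd hw (huv.2 (huw.lt_of_ne hne.symm))

theorem le_iff_of_covBy_of_isChain {u v w : N} (huv : u ⋖ v) : w ≤ v ↔ w ≤ u ∨ w = v :=
  ⟨fun hw => hw.lt_or_eq.imp_left (le_of_lt_of_covBy_of_isChain hchain huv),
    by rintro (hw | rfl); exacts [hw.trans huv.le, le_rfl]⟩

theorem eq_of_covBy_of_covBy_of_isChain {u u' v : N} (hu : u ⋖ v) (hu' : u' ⋖ v) : u = u' :=
  (le_of_lt_of_covBy_of_isChain hchain hu' hu.lt).antisymm
    (le_of_lt_of_covBy_of_isChain hchain hu hu'.lt)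

theorem exists_potential_of_isChain {ι M : Type*} [Fintype ι] [AddCommGroup M]
    (p : ι → N × N) (hp : Function.Injective p) (hcov : ∀ i, (p i).1 ⋖ (p i).2) (g : ι → M) :
    ∃ φ : N → M, ∀ i, φ (p i).1 - φ (p i).2 = g i := by
  classical
  -- `φ (p i).1 - φ (p i).2` sums `g j` over the edges `j` ending in `(p i).2`: only `j = i`
  refine ⟨fun v => -∑ j, if (p j).2 ≤ v then g j else 0, fun i => ?_⟩
  have htarget : ∀ j, (p j).2 = (p i).2 ↔ j = i := fun j =>
    ⟨fun h => hp (Prod.ext (eq_of_covBy_of_covBy_of_isChain hchain (h ▸ hcov j) (hcov i)) h),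
      fun h => h ▸ rfl⟩
  dsimp only
  rw [neg_sub_neg, ← Finset.sum_sub_distrib, ← Fintype.sum_ite_eq' i g]
  refine Finset.sum_congr rfl fun j _ => ?_
  rw [le_iff_of_covBy_of_isChain hchain (hcov i), htarget]
  by_cases hji : j = i
  · subst hji
    simp [(hcov j).lt.not_ge]
  · simp [hji]

end ForestOrder

section DifferenceMatrix

open MvPolynomial

variable {N Ω : Type*} [Fintype Ω] [DecidableEq Ω]

def diffMatrix (val : N → Ω → ℝ) (p : Ω → N × N) : Matrix Ω Ω ℝ :=
  Matrix.of fun ω => val (p ω).1 - val (p ω).2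

noncomputable def diffDetPoly (val : N → Ω → ℝ) (p : Ω → N × N) : MvPolynomial (N × Ω) ℝ :=
  Matrix.det <| Matrix.of fun ω ω' =>
    C (val (p ω).1 ω' - val (p ω).2 ω') + X ((p ω).1, ω') - X ((p ω).2, ω')

theorem eval_diffDetPoly (val : N → Ω → ℝ) (p : Ω → N × N) (e : N × Ω → ℝ) :
    eval e (diffDetPoly val p) = (diffMatrix (fun u ω => val u ω + e (u, ω)) p).det := by
  rw [diffDetPoly, RingHom.map_det]
  congr 1
  ext ω ω'
  simp [diffMatrix]
  ring

theorem diffDetPoly_ne_zero [PartialOrder N] (hchain : ∀ v : N, IsChain (· ≤ ·) (Set.Iic v))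
    (val : N → Ω → ℝ) {p : Ω → N × N} (hp : Function.Injective p)
    (hcov : ∀ ω, (p ω).1 ⋖ (p ω).2) : diffDetPoly val p ≠ 0 := by
  -- a noise `φ` that turns the difference matrix into the identity
  obtain ⟨φ, hφ⟩ := exists_potential_of_isChain hchain p hp hcov
    (fun ω => (1 : Matrix Ω Ω ℝ) ω - diffMatrix val p ω)
  intro h
  have h1 : diffMatrix (fun u ω => val u ω + φ u ω) p = 1 := by
    ext ω ω'
    have := congrFun (hφ ω) ω'
    simp only [diffMatrix, Matrix.of_apply, Pi.sub_apply] at this ⊢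
    linarith
  simpa [h, h1] using eval_diffDetPoly val p (fun q => φ q.1 q.2)

end DifferenceMatrix

namespace MP

theorem isProbabilityMeasure_unif {ε : ℝ} (hε : 0 < ε) : IsProbabilityMeasure (unif ε) := by
  constructor
  rw [unif, Measure.smul_apply, Measure.restrict_apply_univ, Real.volume_Ioo, sub_neg_eq_add,
    ← two_mul, smul_eq_mul, ENNReal.inv_mul_cancel (by simpa using hε) ENNReal.ofReal_ne_top]

instance nullSingletonClass_unif (ε : ℝ) : NullSingletonClass (unif ε) := ⟨fun x => by simp [unif]⟩

section Profile

variable {A B : Type*} {L : Pref A B}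

def nodeLT (L : Pref A B) : A × B ⊕ B × A → A × B ⊕ B × A → Prop
  | .inl (a, y), .inl (a', y') => a = a' ∧ L.1 a y y' = true
  | .inr (b, x), .inr (b', x') => b = b' ∧ L.2 b x x' = true
  | _, _ => False

theorem isStrictOrder_nodeLT (hL : StrictProfile L) : IsStrictOrder _ (nodeLT L) where
  irrefl u := by
    rcases u with ⟨a, y⟩ | ⟨b, x⟩ <;> simp [nodeLT, (hL.1 _).1, (hL.2 _).1]
  trans u v w huv hvw := by
    rcases u with ⟨a, y⟩ | ⟨b, x⟩ <;> rcases v with ⟨a', y'⟩ | ⟨b', x'⟩ <;>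
      rcases w with ⟨a'', y''⟩ | ⟨b'', x''⟩ <;> simp only [nodeLT] at huv hvw ⊢
    · obtain ⟨rfl, h₁⟩ := huv
      obtain ⟨rfl, h₂⟩ := hvw
      exact ⟨rfl, (hL.1 a).2.1 _ _ _ h₁ h₂⟩
    · obtain ⟨rfl, h₁⟩ := huv
      obtain ⟨rfl, h₂⟩ := hvw
      exact ⟨rfl, (hL.2 b).2.1 _ _ _ h₁ h₂⟩

theorem nodeLT_total_of_lt (hL : StrictProfile L) {u v w : A × B ⊕ B × A}
    (hu : nodeLT L u v) (hw : nodeLT L w v) (hne : u ≠ w) : nodeLT L u w ∨ nodeLT L w u := by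
  rcases v with ⟨a, y⟩ | ⟨b, x⟩ <;> rcases u with ⟨a₁, y₁⟩ | ⟨b₁, x₁⟩ <;>
    rcases w with ⟨a₂, y₂⟩ | ⟨b₂, x₂⟩ <;> simp only [nodeLT] at hu hw ⊢
  · obtain ⟨rfl, -⟩ := hu
    obtain ⟨rfl, -⟩ := hw
    simp only [true_and]
    exact (hL.1 _).2.2 y₁ y₂ (by rintro rfl; exact hne rfl)
  · obtain ⟨rfl, -⟩ := hu
    obtain ⟨rfl, -⟩ := hw
    simp only [true_and]
    exact (hL.2 _).2.2 x₁ x₂ (by rintro rfl; exact hne rfl)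

abbrev nodeOrder (hL : StrictProfile L) : PartialOrder (A × B ⊕ B × A) :=
  @partialOrderOfSO _ (nodeLT L) (isStrictOrder_nodeLT hL)

theorem isChain_Iic_nodeOrder (hL : StrictProfile L) :
    letI := nodeOrder hL
    ∀ v : A × B ⊕ B × A, IsChain (· ≤ ·) (Set.Iic v) := by
  intro v u hu w hw hne
  rcases hu with rfl | hu <;> rcases hw with rfl | hw
  exacts [absurd rfl hne, Or.inr (Or.inr hw), Or.inl (Or.inr hu),
    (nodeLT_total_of_lt hL hu hw hne).imp Or.inr Or.inr]

def nodeVal {Ω : Type*} (vA : A → B → Ω → ℝ) (vB : B → A → Ω → ℝ) : A × B ⊕ B × A → Ω → ℝ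
  | .inl (a, y) => vA a y
  | .inr (b, x) => vB b x

theorem exists_covBy_of_mem_Vset {Ω : Type*} (hL : StrictProfile L) {vA : A → B → Ω → ℝ}
    {vB : B → A → Ω → ℝ} {w : Ω → ℝ} (hw : w ∈ Vset vA vB L) :
    letI := nodeOrder hL
    ∃ u v, u ⋖ v ∧ w = nodeVal vA vB u - nodeVal vA vB v := by
  rcases hw with ⟨a, y, y', hc, rfl⟩ | ⟨b, x, x', hc, rfl⟩
  · refine ⟨.inl (a, y), .inl (a, y'), ⟨⟨rfl, hc.1⟩, fun c h₁ h₂ => ?_⟩, rfl⟩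
    rcases c with ⟨a'', z⟩ | _
    · obtain ⟨rfl, h₁⟩ := h₁
      exact hc.2 z ⟨h₁, h₂.2⟩
    · exact h₁
  · refine ⟨.inr (b, x), .inr (b, x'), ⟨⟨rfl, hc.1⟩, fun c h₁ h₂ => ?_⟩, rfl⟩
    rcases c with _ | ⟨b'', z⟩
    · exact h₁
    · obtain ⟨rfl, h₁⟩ := h₁
      exact hc.2 z ⟨h₁, h₂.2⟩

theorem nodeVal_add {Ω : Type*} (vA : A → B → Ω → ℝ) (vB : B → A → Ω → ℝ)
    (e : (A × B ⊕ B × A) × Ω → ℝ) :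
    nodeVal (fun a b ω => vA a b ω + e (.inl (a, b), ω))
        (fun b a ω => vB b a ω + e (.inr (b, a), ω)) = fun u ω => nodeVal vA vB u ω + e (u, ω) := by
  ext (⟨a, y⟩ | ⟨b, x⟩) ω <;> rfl

end Profile

theorem nonDegenerate_of_eval_diffDetPoly_ne_zero {Ω A B : Type*} [Fintype Ω] [DecidableEq Ω]
    (vA : A → B → Ω → ℝ) (vB : B → A → Ω → ℝ) (e : (A × B ⊕ B × A) × Ω → ℝ)
    (he : ∀ p, diffDetPoly (nodeVal vA vB) p ≠ 0 →
      MvPolynomial.eval e (diffDetPoly (nodeVal vA vB) p) ≠ 0) :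
    NonDegenerate (fun a b ω => vA a b ω + e (Sum.inl (a, b), ω))
      (fun b a ω => vB b a ω + e (Sum.inr (b, a), ω)) := by
  intro L hL s hs hcard
  let := nodeOrder hL
  choose u v huv hw using fun w : s => exists_covBy_of_mem_Vset hL (hs w.2)
  simp only [nodeVal_add] at hw
  let σ : Ω ≃ s := Fintype.equivOfCardEq (by simp [hcard])
  let p ω := (u (σ ω), v (σ ω))
  have hrows : ∀ ω, diffMatrix (fun u ω => nodeVal vA vB u ω + e (u, ω)) p ω = σ ω := by
    intro ω
    rw [hw]
    rfl
  have hp : Function.Injective p := fun ω ω' h => by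
    rw [← σ.injective.eq_iff, ← Subtype.val_injective.eq_iff, ← hrows, ← hrows]
    ext ω''
    simp only [diffMatrix, Matrix.of_apply, h]
  have hdet := he p (diffDetPoly_ne_zero (isChain_Iic_nodeOrder hL) _ hp fun ω => huv _)
  rw [eval_diffDetPoly] at hdet
  rw [← linearIndependent_equiv σ]
  simpa [Function.comp_def, hrows] using Matrix.linearIndependent_rows_of_det_ne_zero hdet

theorem nondegenerate_of_random_perturbation_general
    {Ω A B : Type} [Fintype Ω] [Fintype A] [Fintype B]
    (vA : A → B → Ω → ℝ) (vB : B → A → Ω → ℝ) (ε : ℝ) (hε : 0 < ε) :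
    Measure.pi (fun _ : (A × B ⊕ B × A) × Ω => unif ε)
      {e : (A × B ⊕ B × A) × Ω → ℝ |
        NonDegenerate (fun a b ω => vA a b ω + e (Sum.inl (a, b), ω))
                      (fun b a ω => vB b a ω + e (Sum.inr (b, a), ω))} = 1 := by
  classical
  have := isProbabilityMeasure_unif hε
  have hgeneric : ∀ᵐ e ∂Measure.pi (fun _ : (A × B ⊕ B × A) × Ω => unif ε), ∀ p,
      diffDetPoly (nodeVal vA vB) p ≠ 0 → MvPolynomial.eval e (diffDetPoly (nodeVal vA vB) p) ≠ 0 :=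
    ae_all_iff.2 fun p => Filter.eventually_imp_distrib_left.2 fun hp =>
      MvPolynomial.ae_pi_eval_ne_zero _ hp
  refine (measure_congr (ae_eq_univ.2 ?_)).trans measure_univ
  exact hgeneric.mono fun e he => nonDegenerate_of_eval_diffDetPoly_ne_zero vA vB e he

/-- **Generic non-degeneracy under random perturbation** (Proposition 6):
adding independent uniform `(-ε, ε)` noise to every value `v_x(y | ω)` yields a
non-degenerate instance with probability `1`. -/
theorem nondegenerate_of_random_perturbation
    {Ω A B : Type} [Fintype Ω] [Nonempty Ω] [Fintype A] [Fintype B]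
    (vA : A → B → Ω → ℝ) (vB : B → A → Ω → ℝ) (ε : ℝ) (hε : 0 < ε) :
    Measure.pi (fun _ : (A × B ⊕ B × A) × Ω => unif ε)
      {e : (A × B ⊕ B × A) × Ω → ℝ |
        NonDegenerate (fun a b ω => vA a b ω + e (Sum.inl (a, b), ω))
                      (fun b a ω => vB b a ω + e (Sum.inr (b, a), ω))} = 1 :=
  nondegenerate_of_random_perturbation_general vA vB ε hε

end MP
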